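/- Let m ≥ 2 and N = 2L be even with L ≥ 1, and let n : Fin m → ℕ with ∑_j n j = N. Suppose exactly two indices j₁ ≠ j₂ have n j₁ and n j₂ odd (all other n j are even). Let c j = n j / 2 (integer division), so ∑_j c j = L − 1. Then 2 · γ(D_N, n) = γ(C_N, n) + P(c), where γ(C_N, n) and γ(D_N, n) are the numbers of cyclic and dihedral necklaces with multiplicities n and P(c) = (L−1)! / ∏_j (c j)!. -/

import Mathlib

/-!
By Burnside's lemma, `2N · γ(D_N, n)` and `N · γ(C_N, n)` count the pairs (group element,
coloring fixed by it) for the dihedral and the cyclic group. The rotations contribute equally to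
both, so `4 γ(D_N, n) - 2 γ(C_N, n)` is `2/N` times the sum over the reflections `x ↦ -i - x` of
their numbers of fixed colorings. Reflections whose `i` have the same parity are conjugate, and
the sum collapses to `#Fix(x ↦ -x) + #Fix(x ↦ -1 - x)`.

For `N = 2L` the reflection `x ↦ -1 - x` moves every vertex, so the colorings it fixes have only
even multiplicities: there are none. A coloring fixed by `x ↦ -x` is determined by the colors of
its fixed vertices `0` and `L`, which must be `j₁` and `j₂` in some order, and by an arbitrary
coloring of the vertices `1, …, L - 1` with multiplicities `n j / 2`. Hence
`4 γ(D_N, n) = 2 γ(C_N, n) + 2 P(c)`.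
-/

/-- A coloring of the regular `N`-gon in `m` colors with multiplicities `n`:
a function `f : ZMod N → Fin m` whose fiber over each color `j` has cardinality `n j`. -/
def IsColoring (N m : ℕ) (n : Fin m → ℕ) (f : ZMod N → Fin m) : Prop :=
  ∀ j, Nat.card {x : ZMod N // f x = j} = n j

/-- Cyclic equivalence of colorings: one is obtained from the other by a rotation `x ↦ x + c`. -/
def cyclicSetoid (N m : ℕ) (n : Fin m → ℕ) :
    Setoid {f : ZMod N → Fin m // IsColoring N m n f} where
  r f g := ∃ c : ZMod N, ∀ x, (g : ZMod N → Fin m) x = (f : ZMod N → Fin m) (x + c)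
  iseqv := by
    refine ⟨fun f => ⟨0, fun x => by rw [add_zero]⟩, ?_, ?_⟩
    · rintro f g ⟨c, h⟩
      exact ⟨-c, fun x => by rw [h, neg_add_cancel_right]⟩
    · rintro f g k ⟨c, h1⟩ ⟨d, h2⟩
      exact ⟨d + c, fun x => by rw [h2, h1, add_assoc]⟩

/-- The number of cyclic necklaces: orbits of colorings under rotations. -/
noncomputable def gammaC (N m : ℕ) (n : Fin m → ℕ) : ℕ :=
  Nat.card (Quotient (cyclicSetoid N m n))

/-- Dihedral equivalence of colorings: one is obtained from the other by an element of
the subgroup of permutations of `ZMod N` generated by `x ↦ x + 1` and `x ↦ -x`. -/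
def dihedralSetoid (N m : ℕ) (n : Fin m → ℕ) :
    Setoid {f : ZMod N → Fin m // IsColoring N m n f} where
  r f g := ∃ σ ∈ Subgroup.closure
      ({Equiv.addRight (1 : ZMod N), Equiv.neg (ZMod N)} : Set (Equiv.Perm (ZMod N))),
      ∀ x, (g : ZMod N → Fin m) x = (f : ZMod N → Fin m) (σ x)
  iseqv := by
    refine ⟨fun f => ⟨1, one_mem _, fun x => rfl⟩, ?_, ?_⟩
    · rintro f g ⟨σ, hσ, h⟩
      exact ⟨σ⁻¹, inv_mem hσ, fun x => by rw [h]; exact congrArg _ (σ.apply_symm_apply x).symm⟩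
    · rintro f g k ⟨σ, hσ, h1⟩ ⟨τ, hτ, h2⟩
      exact ⟨σ * τ, mul_mem hσ hτ, fun x => by rw [h2, h1, Equiv.Perm.mul_apply]⟩

/-- The number of dihedral necklaces: orbits of colorings under rotations and reflections. -/
noncomputable def gammaD (N m : ℕ) (n : Fin m → ℕ) : ℕ :=
  Nat.card (Quotient (dihedralSetoid N m n))

open Finset MulAction DihedralGroup

section FiberCount

variable {β ι : Type*} [Fintype β] [Fintype ι]

theorem exists_card_fiber_eq (k : ι → ℕ) (hk : ∑ i, k i = Nat.card β) :
    ∃ h : β → ι, ∀ i, Nat.card {x // h x = i} = k i := by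
  have e : β ≃ Σ i, Fin (k i) := (Finite.card_eq.mp (by simp [hk])).some
  refine ⟨fun x => (e x).1, fun i => ?_⟩
  rw [Nat.card_congr (e.subtypeEquiv (q := fun s => s.1 = i) fun _ => Iff.rfl),
    Nat.card_congr (Equiv.sigmaSubtype i), Nat.card_fin]

/-- Orbit–stabilizer: the functions with prescribed fiber sizes form one orbit under `Perm β`,
with stabilizer `∏ i, Perm {x // h x = i}`. -/
theorem card_fun_with_card_fiber_eq_multinomial [DecidableEq β] [DecidableEq ι] (k : ι → ℕ)
    (hk : ∑ i, k i = Nat.card β) :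
    Nat.card {h : β → ι // ∀ i, Nat.card {x // h x = i} = k i} = Nat.multinomial univ k := by
  obtain ⟨h₀, hh₀⟩ := exists_card_fiber_eq k hk
  have horbit (h : β → ι) :
      h ∈ orbit (Equiv.Perm β)ᵈᵐᵃ h₀ ↔ ∀ i, Nat.card {x // h x = i} = k i := by
    constructor
    · rintro ⟨σ, rfl⟩ i
      rw [← hh₀ i]
      exact Nat.card_congr ((DomMulAct.mk.symm σ).subtypeEquiv fun x => by
        simp [DomMulAct.smul_apply])
    · intro hh
      refine ⟨DomMulAct.mk (Equiv.ofFiberEquiv fun i =>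
        (Finite.card_eq.mp ((hh i).trans (hh₀ i).symm)).some), funext fun x => ?_⟩
      simp only [DomMulAct.smul_apply, Equiv.symm_apply_apply, Equiv.Perm.smul_def]
      exact Equiv.ofFiberEquiv_map _ x
  have hstab : Nat.card (stabilizer (Equiv.Perm β)ᵈᵐᵃ h₀) = ∏ i, (k i).factorial := by
    rw [Nat.card_congr (Equiv.subtypeEquiv (q := fun σ : Equiv.Perm β => h₀ ∘ σ = h₀)
        DomMulAct.mk.symm fun _ => DomMulAct.mem_stabilizer_iff),
      Nat.card_eq_fintype_card, DomMulAct.stabilizer_card]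
    simp_rw [← Nat.card_eq_fintype_card, hh₀]
  have horbit_stab := (stabilizer (Equiv.Perm β)ᵈᵐᵃ h₀).card_mul_index
  rw [index_stabilizer, ← Nat.card_coe_set_eq, hstab, Nat.card_congr DomMulAct.mk.symm,
    Nat.card_perm, ← hk, ← Nat.multinomial_spec] at horbit_stab
  rw [← Nat.card_congr (Equiv.subtypeEquivRight horbit)]
  exact Nat.eq_of_mul_eq_mul_left (prod_pos fun i _ => (k i).factorial_pos) horbit_stab

end FiberCount

theorem Function.Involutive.even_card_of_forall_ne {X : Type*} [Finite X] {σ : X → X}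
    (hσ : Function.Involutive σ) (hfree : ∀ x, σ x ≠ x) : Even (Nat.card X) := by
  classical
  have := Fintype.ofFinite X
  have hsum : ∑ _x : X, (1 : ZMod 2) = 0 :=
    sum_involution (fun x _ => σ x) (fun _ _ => by decide) (fun x _ _ => hfree x)
      (fun _ _ => mem_univ _) (fun x _ => hσ x)
  rw [sum_const, card_univ, nsmul_one, ZMod.natCast_eq_zero_iff_even] at hsum
  rwa [Nat.card_eq_fintype_card]

namespace DihedralGroup

variable {N : ℕ}

/-- `sr i` acts as `x ↦ -i - x` (not `i - x`) to match `r i * sr j = sr (j - i)`. -/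
instance : SMul (DihedralGroup N) (ZMod N) where
  smul
    | r i, x => x + i
    | sr i, x => -i - x

@[simp] lemma r_smul (i x : ZMod N) : r i • x = x + i := rfl

@[simp] lemma sr_smul (i x : ZMod N) : sr i • x = -i - x := rfl

instance : MulAction (DihedralGroup N) (ZMod N) where
  one_smul _ := add_zero _
  mul_smul := by
    rintro (i | i) (j | j) x <;>
      simp only [r_mul_r, r_mul_sr, sr_mul_r, sr_mul_sr, r_smul, sr_smul] <;> ring

lemma closure_r_one_sr_zero :
    Subgroup.closure {r 1, sr 0} = (⊤ : Subgroup (DihedralGroup N)) := by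
  refine eq_top_iff.mpr fun d _ => ?_
  have hr (i : ZMod N) : r i ∈ Subgroup.closure {r 1, sr 0} := by
    rw [← ZMod.intCast_zmod_cast i, ← r_one_zpow]
    exact zpow_mem (Subgroup.subset_closure (by simp)) _
  rcases d with i | i
  · exact hr i
  · have h0 : sr 0 ∈ Subgroup.closure {r 1, sr (0 : ZMod N)} := Subgroup.subset_closure (by simp)
    simpa using mul_mem h0 (hr i)

lemma closure_addRight_one_neg_eq_range :
    Subgroup.closure {Equiv.addRight (1 : ZMod N), Equiv.neg (ZMod N)} =
      (toPermHom (DihedralGroup N) (ZMod N)).range := by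
  rw [MonoidHom.range_eq_map, ← closure_r_one_sr_zero, MonoidHom.map_closure, Set.image_pair]
  have hneg : toPermHom (DihedralGroup N) (ZMod N) (sr 0) = Equiv.neg (ZMod N) :=
    Equiv.ext fun x => by simp
  rw [hneg]
  rfl

lemma sum_eq_sum_r_add_sum_sr {M : Type*} [AddCommMonoid M] [NeZero N]
    (F : DihedralGroup N → M) : ∑ d, F d = ∑ i, F (r i) + ∑ i, F (sr i) := by
  refine (Fintype.sum_equiv equivSum _ (Sum.elim (F ∘ r) (F ∘ sr)) ?_).trans
    (Fintype.sum_sum_type _)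
  rintro (i | i) <;> rfl

variable (X : Type*) [MulAction (DihedralGroup N) X]

lemma card_fixedBy_sr_add_two_mul (i k : ZMod N) :
    Nat.card (fixedBy X (sr (i + 2 * k))) = Nat.card (fixedBy X (sr i)) := by
  have hconj : sr (i + 2 * k) = r (-k) * sr i * (r (-k))⁻¹ := by
    simp only [r_mul_sr, inv_r, sr_mul_r]
    ring_nf
  rw [hconj, ← smul_fixedBy, Nat.card_coe_set_eq, Set.ncard_smul_set, Nat.card_coe_set_eq]

lemma card_fixedBy_sr_add_card_fixedBy_sr_add_one [NeZero N] (i : ZMod N) :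
    Nat.card (fixedBy X (sr i)) + Nat.card (fixedBy X (sr (i + 1))) =
      Nat.card (fixedBy X (sr 0 : DihedralGroup N)) +
        Nat.card (fixedBy X (sr 1 : DihedralGroup N)) := by
  obtain ⟨k, hk | hk⟩ := Nat.even_or_odd' i.val
  · have hi : i = 0 + 2 * k := by rw [← ZMod.natCast_zmod_val i, hk]; push_cast; ring
    have hi' : i + 1 = 1 + 2 * k := by rw [hi]; ring
    rw [hi', hi, card_fixedBy_sr_add_two_mul, card_fixedBy_sr_add_two_mul]
  · have hi : i = 1 + 2 * k := by rw [← ZMod.natCast_zmod_val i, hk]; push_cast; ring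
    have hi' : i + 1 = 0 + 2 * (k + 1) := by rw [hi]; ring
    rw [hi', hi, card_fixedBy_sr_add_two_mul, card_fixedBy_sr_add_two_mul, add_comm]

lemma two_mul_sum_card_fixedBy_sr [NeZero N] :
    2 * ∑ i : ZMod N, Nat.card (fixedBy X (sr i)) =
      N * (Nat.card (fixedBy X (sr 0 : DihedralGroup N)) +
        Nat.card (fixedBy X (sr 1 : DihedralGroup N))) := by
  have hshift := Equiv.sum_comp (Equiv.addRight (1 : ZMod N)) fun i => Nat.card (fixedBy X (sr i))
  simp only [Equiv.coe_addRight] at hshift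
  rw [two_mul]
  nth_rewrite 2 [← hshift]
  rw [← sum_add_distrib, sum_congr rfl fun i _ => card_fixedBy_sr_add_card_fixedBy_sr_add_one X i,
    sum_const, card_univ, ZMod.card, smul_eq_mul]

end DihedralGroup

lemma MulAction.sum_natCard_fixedBy_eq_natCard_orbits_mul_natCard_group (G X : Type*) [Group G]
    [Fintype G] [MulAction G X] [Finite X] :
    ∑ g : G, Nat.card (fixedBy X g) = Nat.card (orbitRel.Quotient G X) * Nat.card G := by
  classical
  have := Fintype.ofFinite X
  simpa only [Fintype.card_eq_nat_card] using sum_card_fixedBy_eq_card_orbits_mul_card_group G X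

abbrev Coloring (N m : ℕ) (n : Fin m → ℕ) := {f : ZMod N → Fin m // IsColoring N m n f}

section Coloring

variable {N m : ℕ} {n : Fin m → ℕ} {G : Type*} [Group G] [MulAction G (ZMod N)]

lemma IsColoring.comp_smul {f : ZMod N → Fin m} (hf : IsColoring N m n f) (g : G) :
    IsColoring N m n (fun x => f (g • x)) := fun j => by
  rw [← hf j]
  exact Nat.card_congr ((MulAction.toPerm g).subtypeEquiv fun _ => Iff.rfl)

instance : SMul G (Coloring N m n) where
  smul g f := ⟨fun x => f.1 (g⁻¹ • x), f.2.comp_smul g⁻¹⟩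

@[simp] lemma Coloring.smul_apply (g : G) (f : Coloring N m n) (x : ZMod N) :
    (g • f).1 x = f.1 (g⁻¹ • x) := rfl

instance : MulAction G (Coloring N m n) where
  one_smul f := Subtype.ext <| funext fun x => by simp
  mul_smul g h f := Subtype.ext <| funext fun x => by simp [mul_smul]

lemma Coloring.mem_fixedBy_iff (g : G) (f : Coloring N m n) :
    f ∈ fixedBy (Coloring N m n) g ↔ ∀ x, f.1 (g • x) = f.1 x := by
  rw [mem_fixedBy, Subtype.ext_iff, funext_iff]
  refine ⟨fun h x => ?_, fun h x => ?_⟩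
  · simpa using (h (g • x)).symm
  · simpa using (h (g⁻¹ • x)).symm

lemma Coloring.orbitRel_iff (f f' : Coloring N m n) :
    orbitRel G (Coloring N m n) f f' ↔ ∃ g : G, ∀ x, f'.1 x = f.1 (g • x) := by
  rw [orbitRel_apply, mem_orbit_iff]
  refine exists_congr fun g => ⟨fun h x => ?_, fun h => Subtype.ext <| funext fun x => ?_⟩
  · simp [← h]
  · simp [h]

lemma Coloring.fixedBy_r_eq_fixedBy_ofAdd (i : ZMod N) :
    fixedBy (Coloring N m n) (r i) = fixedBy (Coloring N m n) (Multiplicative.ofAdd i) := by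
  ext f
  simp only [Coloring.mem_fixedBy_iff, r_smul]
  simp [add_comm]

lemma cyclicSetoid_eq_orbitRel :
    cyclicSetoid N m n = orbitRel (Multiplicative (ZMod N)) (Coloring N m n) := by
  refine Setoid.ext fun f f' => ?_
  rw [Coloring.orbitRel_iff]
  exact Multiplicative.ofAdd.exists_congr fun c => by simp [add_comm]

lemma dihedralSetoid_eq_orbitRel :
    dihedralSetoid N m n = orbitRel (DihedralGroup N) (Coloring N m n) := by
  refine Setoid.ext fun f f' => ?_
  rw [Coloring.orbitRel_iff]
  change (∃ σ ∈ _, _) ↔ _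
  simp [closure_addRight_one_neg_eq_range]

theorem four_mul_gammaD [NeZero N] :
    4 * gammaD N m n = 2 * gammaC N m n +
      Nat.card (fixedBy (Coloring N m n) (sr 0 : DihedralGroup N)) +
        Nat.card (fixedBy (Coloring N m n) (sr 1 : DihedralGroup N)) := by
  have hD := sum_natCard_fixedBy_eq_natCard_orbits_mul_natCard_group (DihedralGroup N)
    (Coloring N m n)
  have hC := sum_natCard_fixedBy_eq_natCard_orbits_mul_natCard_group (Multiplicative (ZMod N))
    (Coloring N m n)
  have hreflections := two_mul_sum_card_fixedBy_sr (N := N) (Coloring N m n)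
  rw [sum_eq_sum_r_add_sum_sr, nat_card] at hD
  simp only [Coloring.fixedBy_r_eq_fixedBy_ofAdd] at hD
  rw [← Multiplicative.ofAdd.sum_comp, Nat.card_congr Multiplicative.toAdd, Nat.card_zmod] at hC
  rw [gammaD, gammaC, dihedralSetoid_eq_orbitRel, cyclicSetoid_eq_orbitRel]
  refine Nat.eq_of_mul_eq_mul_left (NeZero.pos N) ?_
  linarith

end Coloring

section Reflection

variable {L : ℕ}

lemma ZMod.add_self_ne_neg_one (x : ZMod (2 * L)) : x + x ≠ -1 := by
  intro h
  have h2 := congrArg (ZMod.castHom (dvd_mul_right 2 L) (ZMod 2)) h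
  rw [map_add, map_neg, map_one] at h2
  generalize ZMod.castHom (dvd_mul_right 2 L) (ZMod 2) x = y at h2
  revert y h2
  decide

theorem card_fixedBy_sr_one_eq_zero {m : ℕ} {n : Fin m → ℕ} {j : Fin m} (hj : Odd (n j)) :
    Nat.card (fixedBy (Coloring (2 * L) m n) (sr 1 : DihedralGroup (2 * L))) = 0 := by
  refine Nat.card_eq_zero.mpr (Or.inl ⟨fun ⟨f, hf⟩ => ?_⟩)
  simp only [Coloring.mem_fixedBy_iff, sr_smul] at hf
  have : Finite {x // f.1 x = j} := Nat.finite_of_card_ne_zero (by rw [f.2 j]; exact hj.pos.ne')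
  have heven := Function.Involutive.even_card_of_forall_ne
    (σ := fun x : {x // f.1 x = j} => ⟨-1 - x, (hf x).trans x.2⟩)
    (fun x => Subtype.ext (sub_sub_cancel _ _))
    (fun x hx => ZMod.add_self_ne_neg_one x.1 (by
      have := congrArg Subtype.val hx
      simp only at this
      linear_combination -this))
  rw [f.2 j] at heven
  exact Nat.not_even_iff_odd.mpr hj heven

/-- The residues modulo `2 * L`, indexed so that negation fixes the left summand (`0` and `L`)
and flips the `Bool` on the right one. -/
def reflectionRep (L : ℕ) : Bool ⊕ Fin (L - 1) × Bool → ℤ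
  | .inl b => if b then 0 else L
  | .inr (k, b) => if b then k + 1 else -(k + 1)

lemma reflectionRep_injective (hL : 1 ≤ L) : Function.Injective (reflectionRep L) := by
  rintro ((_ | _) | ⟨k, (_ | _)⟩) ((_ | _) | ⟨k', (_ | _)⟩) h <;>
    simp [reflectionRep, Fin.ext_iff] at h ⊢ <;> omega

lemma reflectionRep_mem_Ioc (hL : 1 ≤ L) (y : Bool ⊕ Fin (L - 1) × Bool) :
    -L < reflectionRep L y ∧ reflectionRep L y ≤ L := by
  rcases y with (_ | _) | ⟨k, (_ | _)⟩ <;> simp [reflectionRep] <;> omega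

lemma intCast_reflectionRep_bijective (hL : 1 ≤ L) :
    Function.Bijective fun y => (reflectionRep L y : ZMod (2 * L)) := by
  have : NeZero (2 * L) := ⟨by omega⟩
  refine (Fintype.bijective_iff_injective_and_card _).mpr ⟨fun y y' h => ?_, ?_⟩
  · have hdvd := (ZMod.intCast_eq_intCast_iff_dvd_sub _ _ _).mp h
    have := reflectionRep_mem_Ioc hL y
    have := reflectionRep_mem_Ioc hL y'
    refine reflectionRep_injective hL
      (eq_of_sub_eq_zero (Int.eq_zero_of_abs_lt_dvd hdvd ?_)).symm
    rw [abs_lt]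
    push_cast
    omega
  · simp only [Fintype.card_sum, Fintype.card_prod, Fintype.card_bool, Fintype.card_fin,
      ZMod.card]
    omega

noncomputable def reflectionChart (hL : 1 ≤ L) : Bool ⊕ Fin (L - 1) × Bool ≃ ZMod (2 * L) :=
  .ofBijective _ (intCast_reflectionRep_bijective hL)

lemma neg_reflectionChart_inl (hL : 1 ≤ L) (b : Bool) :
    -reflectionChart hL (.inl b) = reflectionChart hL (.inl b) := by
  cases b
  · simp only [reflectionChart, reflectionRep, Equiv.ofBijective_apply, Bool.false_eq_true,
      if_false, Int.cast_natCast]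
    rw [neg_eq_iff_add_eq_zero, ← Nat.cast_add, ← two_mul, ZMod.natCast_self]
  · simp [reflectionChart, reflectionRep]

lemma neg_reflectionChart_inr (hL : 1 ≤ L) (k : Fin (L - 1)) (b : Bool) :
    -reflectionChart hL (.inr (k, b)) = reflectionChart hL (.inr (k, !b)) := by
  cases b <;> simp [reflectionChart, reflectionRep]

variable {α : Type*}

def reflectionData (t : (α × α) × (Fin (L - 1) → α)) : Bool ⊕ Fin (L - 1) × Bool → α :=
  Sum.elim (fun b => cond b t.1.1 t.1.2) (fun p => t.2 p.1)

lemma card_fiber_reflectionData [DecidableEq α] (t : (α × α) × (Fin (L - 1) → α)) (j : α) :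
    Nat.card {y // reflectionData t y = j} =
      (if t.1.1 = j then 1 else 0) + (if t.1.2 = j then 1 else 0) +
        2 * Nat.card {k // t.2 k = j} := by
  have hinr : {p // reflectionData t (.inr p) = j} ≃ {k // t.2 k = j} × Bool :=
    Equiv.prodSubtypeFstEquivSubtypeProd (p := fun k => t.2 k = j)
  rw [Nat.card_congr Equiv.subtypeSum, Nat.card_sum, Nat.card_congr hinr, Nat.card_prod,
    Nat.card_eq_fintype_card (α := Bool), Fintype.card_bool, mul_comm,
    Nat.card_eq_fintype_card, Fintype.card_subtype, card_filter, Fintype.sum_bool]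
  -- the two sides differ only in their `Decidable` instances
  rfl

noncomputable def symmetricEquiv (hL : 1 ≤ L) :
    {f : ZMod (2 * L) → α // ∀ x, f (-x) = f x} ≃ (α × α) × (Fin (L - 1) → α) where
  toFun f := ((f.1 (reflectionChart hL (.inl true)), f.1 (reflectionChart hL (.inl false))),
    fun k => f.1 (reflectionChart hL (.inr (k, true))))
  invFun t := ⟨reflectionData t ∘ (reflectionChart hL).symm, fun x => by
    obtain ⟨y, rfl⟩ := (reflectionChart hL).surjective x
    rcases y with b | ⟨k, b⟩
    · rw [neg_reflectionChart_inl]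
    · simp [neg_reflectionChart_inr, reflectionData]⟩
  left_inv f := by
    refine Subtype.ext <| funext fun x => ?_
    obtain ⟨y, rfl⟩ := (reflectionChart hL).surjective x
    rcases y with (_ | _) | ⟨k, (_ | _)⟩
    · simp [reflectionData]
    · simp [reflectionData]
    · have := f.2 (reflectionChart hL (.inr (k, true)))
      rw [neg_reflectionChart_inr] at this
      simpa [reflectionData] using this.symm
    · simp [reflectionData]
  right_inv t := by simp [reflectionData]

lemma card_fiber_symmetricEquiv_symm [DecidableEq α] (hL : 1 ≤ L)
    (t : (α × α) × (Fin (L - 1) → α)) (j : α) :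
    Nat.card {x // ((symmetricEquiv hL).symm t).1 x = j} =
      (if t.1.1 = j then 1 else 0) + (if t.1.2 = j then 1 else 0) +
        2 * Nat.card {k // t.2 k = j} := by
  rw [← card_fiber_reflectionData]
  exact Nat.card_congr ((reflectionChart hL).symm.subtypeEquiv fun _ => Iff.rfl)

end Reflection

section OddPair

variable {ι : Type*} [DecidableEq ι] {n : ι → ℕ} {j₁ j₂ : ι}

lemma ite_add_ite_eq_mod_two (hne : j₁ ≠ j₂) (h₁ : Odd (n j₁)) (h₂ : Odd (n j₂))
    (heven : ∀ j, j ≠ j₁ → j ≠ j₂ → Even (n j)) (j : ι) :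
    (if j₁ = j then 1 else 0) + (if j₂ = j then 1 else 0) = n j % 2 := by
  by_cases hj₁ : j₁ = j
  · subst hj₁
    simp [hne.symm, Nat.odd_iff.mp h₁]
  · by_cases hj₂ : j₂ = j
    · subst hj₂
      simp [hj₁, Nat.odd_iff.mp h₂]
    · simp [hj₁, hj₂, Nat.even_iff.mp (heven j (Ne.symm hj₁) (Ne.symm hj₂))]

lemma fiber_counts_iff (hne : j₁ ≠ j₂) (h₁ : Odd (n j₁)) (h₂ : Odd (n j₂))
    (heven : ∀ j, j ≠ j₁ → j ≠ j₂ → Even (n j)) (p : ι × ι) (c : ι → ℕ) :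
    (∀ j, (if p.1 = j then 1 else 0) + (if p.2 = j then 1 else 0) + 2 * c j = n j) ↔
      (p = (j₁, j₂) ∨ p = (j₂, j₁)) ∧ ∀ j, c j = n j / 2 := by
  have hmod := ite_add_ite_eq_mod_two hne h₁ h₂ heven
  obtain ⟨a, b⟩ := p
  simp only [Prod.mk.injEq]
  constructor
  · intro h
    have hxor (j : ι) (hj : Odd (n j)) : a = j ↔ b ≠ j := by
      have := h j
      rw [Nat.odd_iff] at hj
      by_cases ha : a = j <;> by_cases hb : b = j <;> simp [ha, hb] at this ⊢ <;> omega
    have hab : a = j₁ ∧ b = j₂ ∨ a = j₂ ∧ b = j₁ := by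
      by_cases ha : a = j₁
      · exact Or.inl ⟨ha, by_contra fun hb => hne (ha.symm.trans ((hxor j₂ h₂).mpr hb))⟩
      · have hb : b = j₁ := by_contra fun hb => ha ((hxor j₁ h₁).mpr hb)
        exact Or.inr ⟨(hxor j₂ h₂).mpr fun h => hne (hb.symm.trans h), hb⟩
    refine ⟨hab, fun j => ?_⟩
    have := h j
    have := hmod j
    rcases hab with ⟨rfl, rfl⟩ | ⟨rfl, rfl⟩ <;> omega
  · rintro ⟨hab, hc⟩ j
    rw [hc j]
    have := hmod j
    rcases hab with ⟨rfl, rfl⟩ | ⟨rfl, rfl⟩ <;> omega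

lemma two_mul_sum_div_two_add_two [Fintype ι] (hne : j₁ ≠ j₂) (h₁ : Odd (n j₁))
    (h₂ : Odd (n j₂)) (heven : ∀ j, j ≠ j₁ → j ≠ j₂ → Even (n j)) :
    2 * ∑ j, n j / 2 + 2 = ∑ j, n j := by
  have hmod := ite_add_ite_eq_mod_two hne h₁ h₂ heven
  calc 2 * ∑ j, n j / 2 + 2
      = 2 * ∑ j, n j / 2 + ∑ j, ((if j₁ = j then 1 else 0) + (if j₂ = j then 1 else 0)) :=
        by simp [sum_add_distrib]
    _ = ∑ j, n j := by
        rw [mul_sum, ← sum_add_distrib]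
        exact sum_congr rfl fun j _ => by rw [hmod]; exact Nat.div_add_mod (n j) 2

end OddPair

theorem card_fixedBy_sr_zero {L m : ℕ} {n : Fin m → ℕ} {j₁ j₂ : Fin m} (hL : 1 ≤ L)
    (hne : j₁ ≠ j₂) (h₁ : Odd (n j₁)) (h₂ : Odd (n j₂))
    (heven : ∀ j, j ≠ j₁ → j ≠ j₂ → Even (n j)) (hhalf : ∑ j, n j / 2 = L - 1) :
    Nat.card (fixedBy (Coloring (2 * L) m n) (sr 0 : DihedralGroup (2 * L))) =
      2 * Nat.multinomial univ fun j => n j / 2 := by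
  let E := symmetricEquiv (α := Fin m) hL
  have hfix : fixedBy (Coloring (2 * L) m n) (sr 0 : DihedralGroup (2 * L)) ≃
      {s : {f : ZMod (2 * L) → Fin m // ∀ x, f (-x) = f x} // IsColoring (2 * L) m n s.1} :=
    { toFun f :=
        ⟨⟨f.1.1, fun x => by simpa using (Coloring.mem_fixedBy_iff _ _).mp f.2 x⟩, f.1.2⟩
      invFun s :=
        ⟨⟨s.1.1, s.2⟩, (Coloring.mem_fixedBy_iff _ _).mpr fun x => by simpa using s.1.2 x⟩
      left_inv _ := rfl
      right_inv _ := rfl }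
  have hcount (t : (Fin m × Fin m) × (Fin (L - 1) → Fin m)) :
      IsColoring (2 * L) m n (E.symm t).1 ↔
        (t.1 = (j₁, j₂) ∨ t.1 = (j₂, j₁)) ∧
          ∀ j, Nat.card {k // t.2 k = j} = n j / 2 := by
    simp only [IsColoring, card_fiber_symmetricEquiv_symm, E]
    exact fiber_counts_iff hne h₁ h₂ heven t.1 _
  have hpair : Nat.card {p : Fin m × Fin m // p = (j₁, j₂) ∨ p = (j₂, j₁)} = 2 :=
    (Nat.card_coe_set_eq {(j₁, j₂), (j₂, j₁)}).trans (Set.ncard_pair (by simp [hne]))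
  calc Nat.card (fixedBy (Coloring (2 * L) m n) (sr 0 : DihedralGroup (2 * L)))
      = Nat.card {t // IsColoring (2 * L) m n (E.symm t).1} :=
        Nat.card_congr (hfix.trans E.subtypeEquivOfSubtype')
    _ = Nat.card ({p : Fin m × Fin m // p = (j₁, j₂) ∨ p = (j₂, j₁)} ×
          {h : Fin (L - 1) → Fin m // ∀ j, Nat.card {k // h k = j} = n j / 2}) :=
        Nat.card_congr ((Equiv.subtypeEquivRight hcount).trans <| Equiv.subtypeProdEquivProd
          (p := fun p : Fin m × Fin m => p = (j₁, j₂) ∨ p = (j₂, j₁))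
          (q := fun h : Fin (L - 1) → Fin m => ∀ j, Nat.card {k // h k = j} = n j / 2))
    _ = 2 * Nat.multinomial univ fun j => n j / 2 := by
        rw [Nat.card_prod, hpair,
          card_fun_with_card_fiber_eq_multinomial _ (by simpa using hhalf)]

theorem dihedral_necklace_even_one_odd_pair_general (m L N : ℕ) (hL : 1 ≤ L)
    (hN : N = 2 * L) (n : Fin m → ℕ) (hsum : ∑ j, n j = N)
    (j₁ j₂ : Fin m) (hne : j₁ ≠ j₂) (h₁ : Odd (n j₁)) (h₂ : Odd (n j₂))
    (heven : ∀ j, j ≠ j₁ → j ≠ j₂ → Even (n j)) :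
    2 * gammaD N m n =
      gammaC N m n + Nat.multinomial Finset.univ (fun j => n j / 2) := by
  subst hN
  have : NeZero (2 * L) := ⟨by omega⟩
  have hhalf := two_mul_sum_div_two_add_two hne h₁ h₂ heven
  have hcount := four_mul_gammaD (N := 2 * L) (m := m) (n := n)
  rw [card_fixedBy_sr_zero hL hne h₁ h₂ heven (by omega), card_fixedBy_sr_one_eq_zero h₁]
    at hcount
  omega

/-- Dihedral necklaces for even `N = 2L` with exactly one pair of odd multiplicities:
`2 γ(D_N, n) = γ(C_N, n) + P(c)` where `c j = n j / 2` (integer division). -/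
theorem dihedral_necklace_even_one_odd_pair (m L N : ℕ) (hm : 2 ≤ m) (hL : 1 ≤ L)
    (hN : N = 2 * L) (n : Fin m → ℕ) (hsum : ∑ j, n j = N)
    (j₁ j₂ : Fin m) (hne : j₁ ≠ j₂) (h₁ : Odd (n j₁)) (h₂ : Odd (n j₂))
    (heven : ∀ j, j ≠ j₁ → j ≠ j₂ → Even (n j)) :
    2 * gammaD N m n =
      gammaC N m n + Nat.multinomial Finset.univ (fun j => n j / 2) :=
  dihedral_necklace_even_one_odd_pair_general m L N hL hN n hsum j₁ j₂ hne h₁ h₂ heven
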